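/- In a simple majority voting system with an odd number N of voters, the total Shapley-Shubik rate of success of any voter equals 3/4 + 1/(4N), and in particular converges to 3/4 as N → ∞. -/

import Mathlib

open scoped Classical

/-- The total Shapley-Shubik rate of success of voter `v` in the simple majority
voting system with `N = 2n+1` voters: the probability that `v` votes yes and the
yes-coalition wins (size ≥ n+1) plus the probability that `v` votes no and the
yes-coalition loses (size ≤ n). -/
noncomputable def ssSuccessOdd (n : ℕ) (v : Fin (2 * n + 1)) : ℝ :=
  (∑ A ∈ Finset.univ.filter
      (fun A : Finset (Fin (2 * n + 1)) => v ∈ A ∧ n + 1 ≤ A.card),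
    1 / ((((2 * n + 1 : ℕ) : ℝ) + 1) * ((2 * n + 1).choose A.card : ℝ))) +
  (∑ A ∈ Finset.univ.filter
      (fun A : Finset (Fin (2 * n + 1)) => v ∉ A ∧ A.card ≤ n),
    1 / ((((2 * n + 1 : ℕ) : ℝ) + 1) * ((2 * n + 1).choose A.card : ℝ)))

/-!
Complementation `A ↦ Aᶜ` exchanges the coalitions where `v` votes no and loses with those where
`v` votes yes and wins, and preserves the weight since `C(N, k) = C(N, N - k)`; so the rate is
twice its yes-part. As `v` lies in `C(N - 1, k - 1) = (k / N) C(N, k)` coalitions of size `k`, the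
yes-part is `∑_{k = n + 1}^{N} k / (N (N + 1)) = (n + 1)(3n + 2) / (2N(N + 1))`, and twice this is
`(3n + 2) / (2N) = 3/4 + 1/(4N)`.
-/

open Finset

noncomputable def shapleyShubikWeight (N k : ℕ) : ℝ := 1 / (((N : ℝ) + 1) * (N.choose k : ℝ))

theorem shapleyShubikWeight_sub {N k : ℕ} (hk : k ≤ N) :
    shapleyShubikWeight N (N - k) = shapleyShubikWeight N k := by
  rw [shapleyShubikWeight, Nat.choose_symm hk, shapleyShubikWeight]

theorem choose_mul_shapleyShubikWeight_add_one {m k : ℕ} (hk : k ≤ m) :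
    (m.choose k : ℝ) * shapleyShubikWeight (m + 1) (k + 1) =
      ((k : ℝ) + 1) / ((((m + 1 : ℕ) : ℝ) + 1) * ((m + 1 : ℕ) : ℝ)) := by
  have hpascal : ((m : ℝ) + 1) * m.choose k = (m + 1).choose (k + 1) * ((k : ℝ) + 1) := by
    exact_mod_cast Nat.add_one_mul_choose_eq m k
  have hpos : ((m + 1).choose (k + 1) : ℝ) ≠ 0 := by
    exact_mod_cast (Nat.choose_pos (by omega)).ne'
  rw [shapleyShubikWeight]
  push_cast
  field_simp
  linear_combination hpascal

section
variable {α β : Type*} [Fintype α] [DecidableEq α] [AddCommMonoid β]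

theorem sum_filter_notMem_eq_sum_filter_mem_compl (a : α) (p : Finset α → Prop)
    [DecidablePred p] (f : Finset α → β) :
    ∑ A with a ∉ A ∧ p A, f A = ∑ A with a ∈ A ∧ p Aᶜ, f Aᶜ := by
  rw [sum_filter, sum_filter, ← Equiv.sum_comp (compl_involutive.toPerm _)]
  simp

theorem sum_filter_mem_eq_sum_powerset_erase (a : α) (f : Finset α → β) :
    ∑ A with a ∈ A, f A = ∑ B ∈ (univ.erase a).powerset, f (insert a B) := by
  have h := sum_powerset_insert (notMem_erase a univ) fun A => if a ∈ A then f A else 0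
  rw [insert_erase (mem_univ a), powerset_univ, ← sum_filter] at h
  rw [h, sum_eq_zero, zero_add]
  · exact sum_congr rfl fun B _ => if_pos (mem_insert_self a B)
  · intro B hB
    exact if_neg fun h => notMem_erase a univ (mem_powerset.mp hB h)

theorem sum_filter_mem_apply_card (a : α) (f : ℕ → β) :
    ∑ A with a ∈ A, f #A =
      ∑ j ∈ range (Fintype.card α), (Fintype.card α - 1).choose j • f (j + 1) := by
  have hcard : #(univ.erase a) + 1 = Fintype.card α := by
    rw [card_erase_add_one (mem_univ a), card_univ]
  rw [sum_filter_mem_eq_sum_powerset_erase, ← hcard, add_tsub_cancel_right,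
    ← sum_powerset_apply_card]
  refine sum_congr rfl fun B hB => ?_
  rw [card_insert_of_notMem fun h => notMem_erase a univ (mem_powerset.mp hB h)]

theorem sum_filter_mem_shapleyShubikWeight (a : α) (p : ℕ → Prop) [DecidablePred p] :
    ∑ A with a ∈ A ∧ p #A, shapleyShubikWeight (Fintype.card α) #A =
      (∑ j ∈ range (Fintype.card α) with p (j + 1), ((j : ℝ) + 1)) /
        (((Fintype.card α : ℕ) : ℝ) + 1) / (Fintype.card α : ℝ) := by
  obtain ⟨m, hm⟩ := Nat.exists_eq_add_one_of_ne_zero (Fintype.card_pos_iff.2 ⟨a⟩).ne'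
  rw [← filter_filter, sum_filter,
    sum_filter_mem_apply_card a fun k => if p k then shapleyShubikWeight _ k else 0,
    sum_filter, div_div, sum_div, hm, Nat.add_sub_cancel]
  refine sum_congr rfl fun j hj => ?_
  split_ifs
  · rw [nsmul_eq_mul, choose_mul_shapleyShubikWeight_add_one (by simpa using hj)]
  · rw [smul_zero, zero_div]

end

theorem sum_range_natCast_add_one (m : ℕ) :
    ∑ j ∈ range m, ((j : ℝ) + 1) = m * (m + 1) / 2 := by
  induction m with
  | zero => simp
  | succ m ih => rw [sum_range_succ, ih]; push_cast; ring

theorem sum_Ico_natCast_add_one (n : ℕ) :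
    ∑ j ∈ Ico n (2 * n + 1), ((j : ℝ) + 1) = (n + 1) * (3 * n + 2) / 2 := by
  rw [sum_Ico_eq_sub _ (by omega), sum_range_natCast_add_one, sum_range_natCast_add_one]
  push_cast
  ring

theorem ssSuccessOdd_eq_two_mul (n : ℕ) (v : Fin (2 * n + 1)) :
    ssSuccessOdd n v =
      2 * ∑ A with v ∈ A ∧ n + 1 ≤ #A, shapleyShubikWeight (2 * n + 1) #A := by
  have hlose : ∑ A with v ∉ A ∧ #A ≤ n, shapleyShubikWeight (2 * n + 1) #A =
      ∑ A with v ∈ A ∧ n + 1 ≤ #A, shapleyShubikWeight (2 * n + 1) #A := by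
    rw [sum_filter_notMem_eq_sum_filter_mem_compl v (fun A => #A ≤ n)
      fun A => shapleyShubikWeight (2 * n + 1) #A]
    refine sum_congr (filter_congr fun A _ => ?_) fun A _ => ?_ <;>
      have hA : #A ≤ 2 * n + 1 := by simpa using card_le_univ A
    · rw [card_compl, Fintype.card_fin]
      exact and_congr_right fun _ => by omega
    · rw [card_compl, Fintype.card_fin, shapleyShubikWeight_sub hA]
  change (∑ A with v ∈ A ∧ n + 1 ≤ #A, shapleyShubikWeight (2 * n + 1) #A) +
    ∑ A with v ∉ A ∧ #A ≤ n, shapleyShubikWeight (2 * n + 1) #A = _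
  rw [hlose]
  exact (two_mul _).symm

theorem ssSuccessOdd_eq (n : ℕ) (v : Fin (2 * n + 1)) :
    ssSuccessOdd n v = 3 / 4 + 1 / (4 * ((2 * n + 1 : ℕ) : ℝ)) := by
  have hyes := sum_filter_mem_shapleyShubikWeight v fun k => n + 1 ≤ k
  have hwin : (range (2 * n + 1)).filter (fun j => n + 1 ≤ j + 1) = Ico n (2 * n + 1) := by
    ext j
    simp only [mem_filter, mem_range, mem_Ico]
    omega
  rw [Fintype.card_fin, hwin, sum_Ico_natCast_add_one] at hyes
  rw [ssSuccessOdd_eq_two_mul, hyes]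
  push_cast
  field_simp
  ring

/-- In a simple majority voting system with an odd number `N = 2n+1` of voters,
the total Shapley-Shubik rate of success of any voter equals `3/4 + 1/(4N)`,
and in particular it converges to `3/4` as `N → ∞`. -/
theorem shapley_shubik_success_odd :
    (∀ (n : ℕ) (v : Fin (2 * n + 1)),
      ssSuccessOdd n v = 3 / 4 + 1 / (4 * ((2 * n + 1 : ℕ) : ℝ))) ∧
    Filter.Tendsto (fun n : ℕ => ssSuccessOdd n ⟨0, by omega⟩)
      Filter.atTop (nhds (3 / 4)) := by
  refine ⟨ssSuccessOdd_eq, ?_⟩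
  have hN : Filter.Tendsto (fun n : ℕ => ((2 * n + 1 : ℕ) : ℝ)) Filter.atTop Filter.atTop :=
    tendsto_natCast_atTop_atTop.comp <|
      Filter.tendsto_atTop_mono (fun n => show n ≤ 2 * n + 1 by omega) Filter.tendsto_id
  simpa only [ssSuccessOdd_eq, one_div, add_zero, Pi.inv_apply] using
    ((hN.const_mul_atTop four_pos).inv_tendsto_atTop).const_add (3 / 4 : ℝ)
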